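/- Suppose αx, αy ∈ ℝ and let U₀ = exp(i(αx·X⊗X + αy·Y⊗Y)) (i.e., the KC form with αz = 0). Let φ₊ be the rank-one projector onto (1/√2)(|0⟩ + |1⟩), i.e., φ₊ = !![1/2, 1/2; 1/2, 1/2]. Then Tr_B[U₀ · (I₂ ⊗ φ₊) · U₀†] = I₂. -/

import Mathlib

open Matrix Kronecker Complex

noncomputable section

/-- 2×2 complex matrices (one qubit operators). -/
abbrev M2 := Matrix (Fin 2) (Fin 2) ℂ
/-- 4×4 complex matrices indexed by `(Fin 2) × (Fin 2)` (two-qubit operators). -/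
abbrev M4 := Matrix (Fin 2 × Fin 2) (Fin 2 × Fin 2) ℂ

/-- Pauli X. -/
def PX : M2 := !![0, 1; 1, 0]
/-- Pauli Y. -/
def PY : M2 := !![0, -Complex.I; Complex.I, 0]
/-- Pauli Z. -/
def PZ : M2 := !![1, 0; 0, -1]

def IsUnitary2 (a : M2) : Prop := a ∈ Matrix.unitaryGroup (Fin 2) ℂ
def IsUnitary4 (U : M4) : Prop := U ∈ Matrix.unitaryGroup (Fin 2 × Fin 2) ℂ

/-- The global part `exp(i(αx X⊗X + αy Y⊗Y + αz Z⊗Z))` of a Kraus–Cirac decomposition. -/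
def KCcore (ax ay az : ℝ) : M4 :=
  NormedSpace.exp (Complex.I •
    ((ax : ℂ) • (PX ⊗ₖ PX) + (ay : ℂ) • (PY ⊗ₖ PY) + (az : ℂ) • (PZ ⊗ₖ PZ)))

/-- The number of nonzero coefficients among `(αx, αy, αz)`. -/
def nnz (ax ay az : ℝ) : ℕ :=
  (if ax = 0 then 0 else 1) + (if ay = 0 then 0 else 1) + (if az = 0 then 0 else 1)

/-- The Kraus–Cirac number `#KC(U)`: the minimum number of nonzero KC coefficients over
all Kraus–Cirac decompositions of `U`. -/
def KCnum (U : M4) : ℕ :=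
  sInf { n | ∃ uA uB vA vB : M2, ∃ ax ay az : ℝ,
    IsUnitary2 uA ∧ IsUnitary2 uB ∧ IsUnitary2 vA ∧ IsUnitary2 vB ∧
    U = (uA ⊗ₖ uB) * KCcore ax ay az * (vA ⊗ₖ vB) ∧ n = nnz ax ay az }

def E00 : M2 := !![1, 0; 0, 0]
def E11 : M2 := !![0, 0; 0, 1]

/-- Controlled-unitaries up to local unitaries. -/
def Uc : Set M4 := { U | ∃ a b c d w : M2,
  IsUnitary2 a ∧ IsUnitary2 b ∧ IsUnitary2 c ∧ IsUnitary2 d ∧ IsUnitary2 w ∧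
  U = (a ⊗ₖ b) * (E00 ⊗ₖ (1 : M2) + E11 ⊗ₖ w) * (c ⊗ₖ d) }

/-- Partial trace over the second qubit. -/
def ptraceB (M : M4) : M2 := Matrix.of fun i j => ∑ k : Fin 2, M (i, k) (j, k)

/-- The controlled-phase gate `diag(1,1,1,e^{iθ})`. -/
def Cp (θ : ℝ) : M4 :=
  Matrix.diagonal fun p => if p = ((1 : Fin 2), (1 : Fin 2)) then Complex.exp (Complex.I * θ) else 1

/-!
`X⊗X` and `Y⊗Y` commute, so `U₀ = exp(iαy Y⊗Y) exp(iαx X⊗X)`. Writing `φ₊ = (1 + X)/2` and using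
unitarity of `U₀`, it remains to show `Tr_B[U₀ (1⊗X) U₀†] = 0`. The factor `exp(iαx X⊗X)` commutes
with `1⊗X` and drops out; what is left, `exp(iαy Y⊗Y) (1⊗X) exp(-iαy Y⊗Y)`, anticommutes with `1⊗Y`.
Conjugation by the involution `1⊗Y`, which acts on `B` alone, preserves `Tr_B`, so that partial trace
equals its own negative.
-/

namespace Matrix

section Kronecker

variable {R l m : Type*} [CommRing R] [Fintype l] [Fintype m]
  {a b : Matrix l l R} {c d : Matrix m m R}

lemma commute_kronecker (hab : Commute a b) (hcd : Commute c d) : Commute (a ⊗ₖ c) (b ⊗ₖ d) := by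
  rw [Commute, SemiconjBy, ← mul_kronecker_mul, ← mul_kronecker_mul, hab.eq, hcd.eq]

lemma commute_kronecker_of_anticommute (hab : b * a = -(a * b)) (hcd : d * c = -(c * d)) :
    Commute (a ⊗ₖ c) (b ⊗ₖ d) := by
  rw [Commute, SemiconjBy, ← mul_kronecker_mul, ← mul_kronecker_mul, hab, hcd]
  ext
  simp

lemma kronecker_anticommute_of_commute_of_anticommute (hab : Commute a b)
    (hcd : d * c = -(c * d)) : (b ⊗ₖ d) * (a ⊗ₖ c) = -((a ⊗ₖ c) * (b ⊗ₖ d)) := by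
  rw [← mul_kronecker_mul, ← mul_kronecker_mul, hab.eq, hcd]
  ext
  simp

end Kronecker

lemma IsHermitian.kronecker {R l m : Type*} [CommRing R] [StarRing R] {a : Matrix l l R}
    {c : Matrix m m R} (ha : a.IsHermitian) (hc : c.IsHermitian) : (a ⊗ₖ c).IsHermitian := by
  rw [IsHermitian, conjTranspose_kronecker, ha.eq, hc.eq]

lemma IsHermitian.ofReal_smul {n : Type*} {A : Matrix n n ℂ} (hA : A.IsHermitian) (r : ℝ) :
    ((r : ℂ) • A).IsHermitian :=
  hA.smul (conj_ofReal r)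

section Exponential

variable {m : Type*} [Fintype m] [DecidableEq m]

lemma exp_mul_exp_neg {𝔸 : Type*} [NormedRing 𝔸] [NormedAlgebra ℚ 𝔸] [CompleteSpace 𝔸]
    (A : Matrix m m 𝔸) : NormedSpace.exp A * NormedSpace.exp (-A) = 1 := by
  rw [← exp_add_of_commute _ _ (Commute.neg_right (Commute.refl A)), add_neg_cancel,
    NormedSpace.exp_zero]

lemma exp_mul_mul_exp_neg_of_commute {A Q : Matrix m m ℂ} (h : Commute A Q) :
    NormedSpace.exp A * Q * NormedSpace.exp (-A) = Q := by
  open scoped Norms.Operator in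
  rw [(Commute.exp_left h).eq, mul_assoc, exp_mul_exp_neg, mul_one]

lemma IsHermitian.conjTranspose_exp_I_smul {H : Matrix m m ℂ} (hH : H.IsHermitian) :
    (NormedSpace.exp (I • H))ᴴ = NormedSpace.exp (-(I • H)) := by
  rw [← exp_conjTranspose, conjTranspose_smul, hH.eq, star_def, conj_I, neg_smul]

end Exponential

end Matrix

lemma ptraceB_add (M N : M4) : ptraceB (M + N) = ptraceB M + ptraceB N := by
  ext i j
  simp [ptraceB, Finset.sum_add_distrib]

lemma ptraceB_smul (c : ℂ) (M : M4) : ptraceB (c • M) = c • ptraceB M := by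
  ext i j
  simp [ptraceB, mul_add]

lemma ptraceB_neg (M : M4) : ptraceB (-M) = -ptraceB M := by
  simpa using ptraceB_smul (-1) M

lemma ptraceB_kronecker (A B : M2) : ptraceB (A ⊗ₖ B) = B.trace • A := by
  ext i j
  simp [ptraceB, trace]
  ring

lemma ptraceB_one : ptraceB 1 = (2 : ℂ) • 1 := by
  rw [← one_kronecker_one, ptraceB_kronecker, trace_one]
  norm_num

lemma ptraceB_mul_one_kronecker (M : M4) (B : M2) :
    ptraceB (M * (1 ⊗ₖ B)) = ptraceB ((1 ⊗ₖ B) * M) := by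
  ext i j
  simp [ptraceB, mul_apply, Fintype.sum_prod_type, one_apply, Fin.sum_univ_two]
  ring

lemma ptraceB_eq_zero_of_anticommute {M : M4} {B : M2} (hB : B * B = 1)
    (h : (1 ⊗ₖ B) * M = -(M * (1 ⊗ₖ B))) : ptraceB M = 0 := by
  have hW : (1 ⊗ₖ B) * (1 ⊗ₖ B) = (1 : M4) := by
    rw [← mul_kronecker_mul, one_mul, hB, one_kronecker_one]
  refine (self_eq_neg (G := Fin 2 → Fin 2 → ℂ)).mp ?_
  calc ptraceB M = ptraceB (M * (1 ⊗ₖ B) * (1 ⊗ₖ B)) := by rw [mul_assoc, hW, mul_one]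
    _ = ptraceB ((1 ⊗ₖ B) * (M * (1 ⊗ₖ B))) := ptraceB_mul_one_kronecker _ _
    _ = -ptraceB M := by rw [← mul_assoc, h, neg_mul, mul_assoc, hW, mul_one, ptraceB_neg]

lemma PY_mul_PY : PY * PY = 1 := by
  simp [PY, one_fin_two]

lemma PY_mul_PX : PY * PX = -(PX * PY) := by
  ext i j
  fin_cases i <;> fin_cases j <;> simp [PX, PY]

lemma PX_isHermitian : PX.IsHermitian := by
  ext i j
  fin_cases i <;> fin_cases j <;> simp [PX]

lemma PY_isHermitian : PY.IsHermitian := by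
  ext i j
  fin_cases i <;> fin_cases j <;> simp [PY]

lemma PZ_isHermitian : PZ.IsHermitian := by
  ext i j
  fin_cases i <;> fin_cases j <;> simp [PZ]

lemma isHermitian_KC_hamiltonian (ax ay az : ℝ) :
    ((ax : ℂ) • (PX ⊗ₖ PX) + (ay : ℂ) • (PY ⊗ₖ PY) + (az : ℂ) • (PZ ⊗ₖ PZ)).IsHermitian := by
  have hkron {A : M2} (hA : A.IsHermitian) (r : ℝ) : ((r : ℂ) • (A ⊗ₖ A)).IsHermitian :=
    (hA.kronecker hA).ofReal_smul r
  exact ((hkron PX_isHermitian ax).add (hkron PY_isHermitian ay)).add (hkron PZ_isHermitian az)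

lemma KCcore_mul_conjTranspose (ax ay az : ℝ) : KCcore ax ay az * (KCcore ax ay az)ᴴ = 1 := by
  rw [KCcore, (isHermitian_KC_hamiltonian ax ay az).conjTranspose_exp_I_smul, exp_mul_exp_neg]

lemma KCcore_zero_eq (ax ay : ℝ) :
    KCcore ax ay 0 = NormedSpace.exp (I • (ay : ℂ) • (PY ⊗ₖ PY)) *
      NormedSpace.exp (I • (ax : ℂ) • (PX ⊗ₖ PX)) := by
  have hXY : Commute (PY ⊗ₖ PY) (PX ⊗ₖ PX) :=
    commute_kronecker_of_anticommute (by rw [PY_mul_PX, neg_neg]) (by rw [PY_mul_PX, neg_neg])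
  rw [KCcore, ofReal_zero, zero_smul, add_zero, add_comm, smul_add,
    exp_add_of_commute _ _ (((hXY.smul_left _).smul_right _).smul_left _ |>.smul_right _)]

lemma KCcore_zero_conj_one_kronecker_PX (ax ay : ℝ) :
    KCcore ax ay 0 * (1 ⊗ₖ PX) * (KCcore ax ay 0)ᴴ =
      NormedSpace.exp (I • (ay : ℂ) • (PY ⊗ₖ PY)) * (1 ⊗ₖ PX) *
        NormedSpace.exp (-(I • (ay : ℂ) • (PY ⊗ₖ PY))) := by
  have hXX : Commute (I • (ax : ℂ) • (PX ⊗ₖ PX)) (1 ⊗ₖ PX) :=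
    ((commute_kronecker (Commute.one_right PX) (Commute.refl PX)).smul_left _).smul_left _
  rw [KCcore_zero_eq, conjTranspose_mul,
    (PX_isHermitian.kronecker PX_isHermitian |>.ofReal_smul ax).conjTranspose_exp_I_smul,
    (PY_isHermitian.kronecker PY_isHermitian |>.ofReal_smul ay).conjTranspose_exp_I_smul,
    mul_assoc _ _ (1 ⊗ₖ PX), ← mul_assoc, mul_assoc _ (_ * _), exp_mul_mul_exp_neg_of_commute hXX]

lemma ptraceB_exp_conj_one_kronecker_PX (r : ℝ) :
    ptraceB (NormedSpace.exp (I • (r : ℂ) • (PY ⊗ₖ PY)) * (1 ⊗ₖ PX) *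
      NormedSpace.exp (-(I • (r : ℂ) • (PY ⊗ₖ PY)))) = 0 := by
  set A := I • (r : ℂ) • (PY ⊗ₖ PY)
  have hA : Commute (1 ⊗ₖ PY) A :=
    ((commute_kronecker (Commute.one_left PY) (Commute.refl PY)).smul_right _).smul_right _
  have hQ : (1 ⊗ₖ PY) * (1 ⊗ₖ PX) = -((1 ⊗ₖ PX) * (1 ⊗ₖ PY) : M4) :=
    kronecker_anticommute_of_commute_of_anticommute (Commute.refl 1) PY_mul_PX
  open scoped Norms.Operator in
  refine ptraceB_eq_zero_of_anticommute PY_mul_PY ?_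
  rw [← mul_assoc, ← mul_assoc, hA.exp_right.eq, mul_assoc _ (1 ⊗ₖ PY), hQ,
    mul_assoc _ _ (1 ⊗ₖ PY), ← hA.neg_right.exp_right.eq]
  noncomm_ring

lemma plus_projector_eq : (!![1/2, 1/2; 1/2, 1/2] : M2) = (1/2 : ℂ) • (1 + PX) := by
  ext i j
  fin_cases i <;> fin_cases j <;> simp [PX]

/-- with `αz = 0` and input `φ₊ = |+⟩⟨+|` on B, the induced map on A is unital. -/
theorem stmt11 (ax ay : ℝ) :
    ptraceB (KCcore ax ay 0 *
        ((1 : M2) ⊗ₖ !![1/2, 1/2; 1/2, 1/2]) *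
        (KCcore ax ay 0)ᴴ) = (1 : M2) := by
  set U := KCcore ax ay 0
  calc ptraceB (U * ((1 : M2) ⊗ₖ !![1/2, 1/2; 1/2, 1/2]) * Uᴴ)
      = (1/2 : ℂ) • (ptraceB (U * Uᴴ) + ptraceB (U * (1 ⊗ₖ PX) * Uᴴ)) := by
        rw [plus_projector_eq, kronecker_smul, kronecker_add, one_kronecker_one, mul_smul_comm,
          smul_mul_assoc, mul_add, add_mul, mul_one, ptraceB_smul, ptraceB_add]
    _ = (1/2 : ℂ) • ptraceB 1 := by
        rw [KCcore_mul_conjTranspose, KCcore_zero_conj_one_kronecker_PX,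
          ptraceB_exp_conj_one_kronecker_PX, add_zero]
    _ = 1 := by
        rw [ptraceB_one, smul_smul]
        norm_num

end
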